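/- Let μ_S > 0, σ_S > 0, μ_T ∈ ℝ, σ_T ≥ 0. If μ_T < 0 then (μ_S + μ_T)/√(σ_S² + σ_T²) < μ_S/σ_S. Conversely, if μ_T ≥ 0 and the inequality (μ_S + μ_T)/√(σ_S² + σ_T²) < μ_S/σ_S holds, then σ_T² > σ_S²·((μ_S+μ_T)²/μ_S² − 1); i.e., the variance of the spurious contribution must be sufficiently large. -/
import Mathlib


/-- the SNR condition holds under spurious correlation reversal (`μT < 0`),
and conversely, with `μT ≥ 0`, it forces a sufficiently large spurious variance. -/
theorem stmt4 (μS σS μT σT : ℝ) (hμS : 0 < μS) (hσS : 0 < σS) (hσT : 0 ≤ σT) :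
    (μT < 0 → (μS + μT) / Real.sqrt (σS ^ 2 + σT ^ 2) < μS / σS)
    ∧ (0 ≤ μT → (μS + μT) / Real.sqrt (σS ^ 2 + σT ^ 2) < μS / σS →
        σS ^ 2 * ((μS + μT) ^ 2 / μS ^ 2 - 1) < σT ^ 2) := by
  have hσS2 : (0:ℝ) < σS ^ 2 + σT ^ 2 := by positivity
  have hs : σS ≤ Real.sqrt (σS ^ 2 + σT ^ 2) := by
    have := Real.sqrt_le_sqrt (show σS ^ 2 ≤ σS ^ 2 + σT ^ 2 by nlinarith)
    rwa [Real.sqrt_sq hσS.le] at this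
  have hspos : 0 < Real.sqrt (σS ^ 2 + σT ^ 2) := lt_of_lt_of_le hσS hs
  constructor
  · intro hμT
    rcases le_or_gt (μS + μT) 0 with h | h
    · have h1 : (μS + μT) / Real.sqrt (σS ^ 2 + σT ^ 2) ≤ 0 :=
        div_nonpos_of_nonpos_of_nonneg h hspos.le
      have h2 : 0 < μS / σS := by positivity
      linarith
    · calc (μS + μT) / Real.sqrt (σS ^ 2 + σT ^ 2) ≤ (μS + μT) / σS := by
            gcongr
        _ < μS / σS := by gcongr; linarith
  · intro hμT hineq
    have h1 : (μS + μT) * σS < μS * Real.sqrt (σS ^ 2 + σT ^ 2) := by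
      rw [div_lt_div_iff₀ hspos hσS] at hineq; linarith
    have h2 : Real.sqrt (σS ^ 2 + σT ^ 2) ^ 2 = σS ^ 2 + σT ^ 2 := Real.sq_sqrt hσS2.le
    have h3 : (μS + μT) ^ 2 * σS ^ 2 < μS ^ 2 * (σS ^ 2 + σT ^ 2) := by
      nlinarith [mul_pos (by linarith : (0:ℝ) < μS + μT) hσS, mul_pos hμS hspos]
    have h4 : σS ^ 2 * ((μS + μT) ^ 2 / μS ^ 2) < σS ^ 2 + σT ^ 2 := by
      rw [mul_comm, div_mul_eq_mul_div, div_lt_iff₀ (by positivity)]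
      nlinarith
    nlinarith [h4]
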